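/- Let A ∈ ℂ^{m×n}, b ∈ ℂ^m, μ > 0, β > 0, and let τ, γ > 0 satisfy τ·λ_max + γ < 2, where λ_max is the largest eigenvalue of A*A. Let (r̃, x̃) be a solution of min{‖x‖₁ + (1/(2μ))‖r‖₂² : A x + r = b} and set ỹ = r̃/μ. Consider the iteration: r^{k+1} = (μβ/(1+μβ))·(y^k/β − (A x^k − b)), g^k = A*(A x^k + r^{k+1} − b − y^k/β), x^{k+1} = Shrink(x^k − τ g^k, τ/β), y^{k+1} = y^k − γβ(A x^{k+1} + r^{k+1} − b). For u = (x; y) define the weighted squared norm ‖u‖_G² = (β/τ)‖x‖₂² + (1/(βγ))‖y‖₂², and set δ = 1 − τλ_max/(2−γ) > 0 and η = min(δ², δ(2−γ)/(γ(1+δ))) > 0. Then for every k, with u^k = (x^k; y^k) and ũ = (x̃; ỹ): ‖u^k − ũ‖_G² − ‖u^{k+1} − ũ‖_G² ≥ η·‖u^k − u^{k+1}‖_G². -/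

import Mathlib

open Filter Topology Matrix Finset

noncomputable def l1 {ι : Type*} [Fintype ι] (v : ι → ℂ) : ℝ := ∑ i, ‖v i‖

noncomputable def l2sq {ι : Type*} [Fintype ι] (v : ι → ℂ) : ℝ := ∑ i, (‖v i‖)^2

noncomputable def l2 {ι : Type*} [Fintype ι] (v : ι → ℂ) : ℝ := Real.sqrt (l2sq v)

noncomputable def linf {ι : Type*} [Fintype ι] (v : ι → ℂ) : ℝ := ⨆ i, ‖v i‖

noncomputable def csign (w : ℂ) : ℂ := if w = 0 then 0 else w / ((‖w‖ : ℝ) : ℂ)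

noncomputable def shrink {ι : Type*} [Fintype ι] (z : ι → ℂ) (ν : ℝ) : ι → ℂ :=
  fun i => ((max (‖z i‖ - ν) 0 : ℝ) : ℂ) * csign (z i)

noncomputable def reInner {ι : Type*} [Fintype ι] (y v : ι → ℂ) : ℝ :=
  (∑ i, (starRingEnd ℂ) (y i) * v i).re

noncomputable def projBall {ι : Type*} [Fintype ι] (t : ℝ) (v : ι → ℂ) : ι → ℂ :=
  if l2 v ≤ t then v else (t / l2 v) • v

noncomputable def projBox {ι : Type*} [Fintype ι] (v : ι → ℂ) : ι → ℂ :=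
  fun i => if ‖v i‖ ≤ 1 then v i else v i / ((‖v i‖ : ℝ) : ℂ)

noncomputable def lmax {m n : ℕ} (A : Matrix (Fin m) (Fin n) ℂ) : ℝ :=
  ⨆ i, (Matrix.isHermitian_conjTranspose_mul_self A).eigenvalues i

/-!
The iteration is a linearized proximal step in `x` followed by a dual ascent step in `y`, and
`(x̃, ỹ)` is a fixed point of the same maps. Three monotonicity facts are combined at each step:
shrinkage is the proximal map of `(τ/β)‖·‖₁`, so `x^k − τ g^k − x^{k+1}` is a scaled subgradient of
`‖·‖₁` at `x^{k+1}`; optimality of `(x̃, r̃)` makes `A* ỹ` a subgradient of `‖·‖₁` at `x̃`; and the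
`r`-update makes `r^{k+1}/μ` a multiplier, `r ↦ r/μ` being monotone. Summing them gives one
inequality in the step `e = x^k − x^{k+1}` and the residual `v = A x^{k+1} + r^{k+1} − b`. Expanding
the `G`-norms turns it into the claim up to the cross term `2β⟨Ae, v⟩`, which Cauchy–Schwarz,
`‖Ae‖² ≤ λ_max ‖e‖²` and AM–GM absorb, because `η` is chosen so that
`τ λ_max ≤ (1 − η)(2 − γ − γη)`.
-/

open scoped InnerProductSpace ComplexConjugate

section reInner

variable {ι : Type*} [Fintype ι]

theorem reInner_eq_inner (y v : ι → ℂ) :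
    reInner y v = ⟪WithLp.toLp 2 y, (WithLp.toLp 2 v : EuclideanSpace ℂ ι)⟫_ℝ := by
  simp [reInner, real_inner_eq_re_inner, PiLp.inner_apply, mul_comm]

theorem l2sq_eq_norm_sq (v : ι → ℂ) : l2sq v = ‖(WithLp.toLp 2 v : EuclideanSpace ℂ ι)‖ ^ 2 := by
  simp [l2sq, EuclideanSpace.norm_sq_eq]

theorem l2sq_eq_re_dotProduct (v : ι → ℂ) : l2sq v = (star v ⬝ᵥ v).re := by
  simp [l2sq, dotProduct, Complex.re_sum, ← Complex.normSq_eq_norm_sq, Complex.normSq_apply]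

theorem l2sq_nonneg (v : ι → ℂ) : 0 ≤ l2sq v := by
  rw [l2sq_eq_norm_sq]; positivity

theorem reInner_self (v : ι → ℂ) : reInner v v = l2sq v := by
  rw [reInner_eq_inner, l2sq_eq_norm_sq, real_inner_self_eq_norm_sq]

theorem reInner_add_left (a b v : ι → ℂ) : reInner (a + b) v = reInner a v + reInner b v := by
  simp only [reInner_eq_inner, WithLp.toLp_add, inner_add_left]

theorem reInner_add_right (y a b : ι → ℂ) : reInner y (a + b) = reInner y a + reInner y b := by
  simp only [reInner_eq_inner, WithLp.toLp_add, inner_add_right]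

theorem reInner_sub_left (a b v : ι → ℂ) : reInner (a - b) v = reInner a v - reInner b v := by
  simp only [reInner_eq_inner, WithLp.toLp_sub, inner_sub_left]

theorem reInner_neg_right (y v : ι → ℂ) : reInner y (-v) = -reInner y v := by
  simp only [reInner_eq_inner, WithLp.toLp_neg, inner_neg_right]

theorem reInner_smul_left (t : ℝ) (y v : ι → ℂ) : reInner (t • y) v = t * reInner y v := by
  simp only [reInner_eq_inner, WithLp.toLp_smul, real_inner_smul_left]

theorem reInner_smul_right (t : ℝ) (y v : ι → ℂ) : reInner y (t • v) = t * reInner y v := by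
  simp only [reInner_eq_inner, WithLp.toLp_smul, real_inner_smul_right]

theorem reInner_sq_le (y v : ι → ℂ) : reInner y v ^ 2 ≤ l2sq y * l2sq v := by
  simpa only [sq, ← reInner_self, ← reInner_eq_inner] using
    real_inner_mul_inner_self_le (WithLp.toLp 2 y : EuclideanSpace ℂ ι) (WithLp.toLp 2 v)

theorem l2sq_add (a b : ι → ℂ) : l2sq (a + b) = l2sq a + 2 * reInner a b + l2sq b := by
  simp only [l2sq_eq_norm_sq, reInner_eq_inner, WithLp.toLp_add, norm_add_sq_real]

theorem l2sq_sub (a b : ι → ℂ) : l2sq (a - b) = l2sq a - 2 * reInner a b + l2sq b := by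
  simp only [l2sq_eq_norm_sq, reInner_eq_inner, WithLp.toLp_sub, norm_sub_sq_real]

theorem l2sq_smul (t : ℝ) (v : ι → ℂ) : l2sq (t • v) = t ^ 2 * l2sq v := by
  simp only [l2sq_eq_norm_sq, WithLp.toLp_smul, norm_smul, Real.norm_eq_abs, mul_pow, sq_abs]

theorem reInner_conjTranspose_mulVec {κ : Type*} [Fintype κ] (A : Matrix κ ι ℂ) (w : κ → ℂ)
    (u : ι → ℂ) : reInner (Aᴴ *ᵥ w) u = reInner w (A *ᵥ u) := by
  change (star (Aᴴ *ᵥ w) ⬝ᵥ u).re = (star w ⬝ᵥ (A *ᵥ u)).re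
  rw [star_mulVec, conjTranspose_conjTranspose, dotProduct_mulVec]

end reInner

section spectral

open scoped MatrixOrder ComplexOrder

theorem lmax_nonneg {m n : ℕ} (A : Matrix (Fin m) (Fin n) ℂ) : 0 ≤ lmax A :=
  Real.iSup_nonneg (posSemidef_conjTranspose_mul_self A).eigenvalues_nonneg

theorem conjTranspose_mul_self_le_lmax {m n : ℕ} (A : Matrix (Fin m) (Fin n) ℂ) :
    Aᴴ * A ≤ algebraMap ℝ _ (lmax A) := by
  refine le_algebraMap_of_spectrum_le ?_ (isHermitian_conjTranspose_mul_self A)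
  rw [(isHermitian_conjTranspose_mul_self A).spectrum_real_eq_range_eigenvalues]
  rintro _ ⟨i, rfl⟩
  exact le_ciSup (Set.finite_range _).bddAbove i

theorem l2sq_mulVec_le_lmax_mul {m n : ℕ} (A : Matrix (Fin m) (Fin n) ℂ) (e : Fin n → ℂ) :
    l2sq (A *ᵥ e) ≤ lmax A * l2sq e := by
  have h := (conjTranspose_mul_self_le_lmax A).re_dotProduct_nonneg e
  simpa [l2sq_eq_re_dotProduct, sub_mulVec, dotProduct_sub, Algebra.algebraMap_eq_smul_one,
    smul_mulVec, ← mulVec_mulVec, star_mulVec, dotProduct_mulVec] using h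

end spectral

section shrink

theorem re_conj_mul_le_norm_mul (a b : ℂ) : (conj a * b).re ≤ ‖a‖ * ‖b‖ :=
  (Complex.re_le_norm _).trans_eq (by rw [norm_mul, Complex.norm_conj])

theorem norm_mul_csign (z : ℂ) : (‖z‖ : ℂ) * csign z = z := by
  by_cases hz : z = 0
  · simp [hz]
  · rw [csign, if_neg hz, mul_div_cancel₀]
    exact_mod_cast norm_ne_zero_iff.mpr hz

theorem norm_csign {z : ℂ} (hz : z ≠ 0) : ‖csign z‖ = 1 := by
  simp [csign, hz]

theorem norm_shrink_apply {ι : Type*} [Fintype ι] (z : ι → ℂ) {ν : ℝ} (hν : 0 ≤ ν) (i : ι) :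
    ‖shrink z ν i‖ = max (‖z i‖ - ν) 0 := by
  by_cases hz : z i = 0
  · simp [shrink, hz, csign, hν]
  · simp [shrink, norm_csign hz]

theorem re_conj_sub_shrink_mul_le (z w : ℂ) {ν : ℝ} (hν : 0 ≤ ν) :
    (conj (z - (max (‖z‖ - ν) 0 : ℝ) * csign z) * (w - (max (‖z‖ - ν) 0 : ℝ) * csign z)).re
      ≤ ν * (‖w‖ - max (‖z‖ - ν) 0) := by
  rcases le_or_gt ‖z‖ ν with hle | hlt
  · have hmax : max (‖z‖ - ν) 0 = 0 := max_eq_right (by linarith)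
    simp only [hmax, Complex.ofReal_zero, zero_mul, sub_zero]
    exact (re_conj_mul_le_norm_mul z w).trans (by gcongr)
  · have hz : z ≠ 0 := norm_pos_iff.mp (hν.trans_lt hlt)
    have hmax : max (‖z‖ - ν) 0 = ‖z‖ - ν := max_eq_left (by linarith)
    -- `z = ‖z‖ u` with `‖u‖ = 1`, so `z` minus its shrinkage is `ν u`.
    set u := csign z
    have hu : conj u * u = 1 := by
      rw [Complex.conj_mul', norm_csign hz]; simp
    have hzu : z - ((‖z‖ - ν : ℝ) : ℂ) * u = ν * u := by
      nth_rewrite 1 [← norm_mul_csign z]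
      push_cast; ring
    rw [hmax, hzu]
    have : conj ((ν : ℂ) * u) * (w - ((‖z‖ - ν : ℝ) : ℂ) * u)
        = (ν : ℂ) * (conj u * w) - ((ν * (‖z‖ - ν) : ℝ) : ℂ) * (conj u * u) := by
      simp only [map_mul, Complex.conj_ofReal, Complex.ofReal_mul]; ring
    rw [this, hu, mul_one, Complex.sub_re, Complex.re_ofReal_mul, Complex.ofReal_re]
    have := re_conj_mul_le_norm_mul u w
    rw [norm_csign hz, one_mul] at this
    nlinarith

theorem reInner_sub_shrink_le {ι : Type*} [Fintype ι] (z x : ι → ℂ) {ν : ℝ} (hν : 0 ≤ ν) :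
    reInner (z - shrink z ν) (x - shrink z ν) ≤ ν * (l1 x - l1 (shrink z ν)) := by
  simp only [reInner, l1, Complex.re_sum, ← Finset.sum_sub_distrib, Finset.mul_sum]
  gcongr with i
  rw [norm_shrink_apply z hν]
  exact re_conj_sub_shrink_mul_le (z i) (x i) hν

end shrink

section optimality

variable {ι κ : Type*} [Fintype ι] [Fintype κ]

theorem l1_add_smul_sub_le (a b : ι → ℂ) {t : ℝ} (ht₀ : 0 ≤ t) (ht₁ : t ≤ 1) :
    l1 (a + t • (b - a)) ≤ (1 - t) * l1 a + t * l1 b := by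
  simp only [l1, Finset.mul_sum, ← Finset.sum_add_distrib]
  gcongr with i
  have : (a + t • (b - a)) i = (1 - t : ℝ) • a i + t • b i := by
    simp only [Pi.add_apply, Pi.smul_apply, Pi.sub_apply]; module
  rw [this]
  refine (norm_add_le _ _).trans_eq ?_
  rw [norm_smul, norm_smul, Real.norm_of_nonneg ht₀, Real.norm_of_nonneg (by linarith)]

theorem nonpos_of_forall_le_mul {a C : ℝ} (h : ∀ t ∈ Set.Ioc (0 : ℝ) 1, a ≤ t * C) : a ≤ 0 := by
  have hlim : Tendsto (fun t : ℝ => t * C) (𝓝[>] 0) (𝓝 0) :=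
    ((continuous_mul_const C).tendsto' 0 0 (zero_mul C)).mono_left nhdsWithin_le_nhds
  exact ge_of_tendsto hlim (eventually_of_mem (Ioc_mem_nhdsGT zero_lt_one) h)

theorem l1_add_reInner_le_of_optimal (A : Matrix κ ι ℂ) (b : κ → ℂ) {μ : ℝ} {xt : ι → ℂ}
    {rt : κ → ℂ} (hfeas : A *ᵥ xt + rt = b)
    (hopt : ∀ (x' : ι → ℂ) (r' : κ → ℂ), A *ᵥ x' + r' = b →
      l1 xt + (1/(2*μ)) * l2sq rt ≤ l1 x' + (1/(2*μ)) * l2sq r') (x : ι → ℂ) :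
    l1 xt + reInner ((1/μ) • rt) (A *ᵥ (x - xt)) ≤ l1 x := by
  -- Perturb the optimum along the feasible line `(xt + t (x - xt), rt - t h)` and let `t → 0⁺`.
  set h := A *ᵥ (x - xt)
  suffices l1 xt + reInner ((1/μ) • rt) h - l1 x ≤ 0 by linarith
  refine nonpos_of_forall_le_mul (C := 1/(2*μ) * l2sq h) fun t ⟨ht₀, ht₁⟩ => ?_
  have hfeas_t : A *ᵥ (xt + t • (x - xt)) + (rt - t • h) = b := by
    rw [mulVec_add, mulVec_smul, ← hfeas]; abel
  have hmin := hopt _ _ hfeas_t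
  have hconv := l1_add_smul_sub_le xt x ht₀.le ht₁
  rw [l2sq_sub, l2sq_smul, reInner_smul_right] at hmin
  rw [reInner_smul_left]
  have : t * (l1 xt + 1/μ * reInner rt h - l1 x) ≤ t * (t * (1/(2*μ) * l2sq h)) := by
    linear_combination hmin + hconv
  exact le_of_mul_le_mul_left this ht₀

end optimality

theorem padm_eta_bounds {d γ η : ℝ} (hd₀ : 0 < d) (hd₁ : d ≤ 1) (hγ : 0 < γ) (hγ₂ : γ < 2)
    (hη : η = min (d ^ 2) (d * (2 - γ) / (γ * (1 + d)))) :
    η ≤ 1 ∧ 0 ≤ 2 - γ - γ * η ∧ (1 - d) * (2 - γ) ≤ (1 - η) * (2 - γ - γ * η) := by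
  have hηd : η ≤ d ^ 2 := hη ▸ min_le_left _ _
  have hη₁ : η ≤ 1 := hηd.trans (by nlinarith)
  have hγη : γ * η ≤ d * (2 - γ) / (1 + d) := by
    calc γ * η ≤ γ * (d * (2 - γ) / (γ * (1 + d))) := by gcongr; exact hη ▸ min_le_right _ _
      _ = d * (2 - γ) / (1 + d) := by field_simp
  have hc : (2 - γ) / (1 + d) ≤ 2 - γ - γ * η := by
    have : (2 - γ) - d * (2 - γ) / (1 + d) = (2 - γ) / (1 + d) := by field_simp; ring
    linarith
  have hc₀ : 0 < (2 - γ) / (1 + d) := div_pos (by linarith) (by linarith)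
  refine ⟨hη₁, hc₀.le.trans hc, ?_⟩
  calc (1 - d) * (2 - γ) = (1 - d ^ 2) * ((2 - γ) / (1 + d)) := by field_simp; ring
    _ ≤ (1 - η) * (2 - γ - γ * η) := by gcongr

section step

variable {ι κ : Type*} [Fintype ι] [Fintype κ]

theorem padm_key_inequality (A : Matrix κ ι ℂ) (b : κ → ℂ) {μ β τ : ℝ} (hμ : 0 < μ)
    (hβ : 0 < β) (hτ : 0 < τ) {xt : ι → ℂ} {rt : κ → ℂ} (hfeas : A *ᵥ xt + rt = b)
    (hopt : ∀ (x' : ι → ℂ) (r' : κ → ℂ), A *ᵥ x' + r' = b →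
      l1 xt + (1/(2*μ)) * l2sq rt ≤ l1 x' + (1/(2*μ)) * l2sq r')
    {x x' : ι → ℂ} {y r' : κ → ℂ}
    (hr : r' = (μ * β / (1 + μ * β)) • ((1/β) • y - (A *ᵥ x - b)))
    (hx : x' = shrink (x - τ • (Aᴴ *ᵥ (A *ᵥ x + r' - b - (1/β) • y))) (τ/β)) :
    0 ≤ reInner (x - x') (x' - xt) + (τ/β) *
      reInner (y - (1/μ) • rt - β • (A *ᵥ x' + r' - b + A *ᵥ (x - x'))) (A *ᵥ x' + r' - b) := by
  have hyh : (1/μ) • r' = y - β • (A *ᵥ x + r' - b) := by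
    have : 0 < 1 + μ * β := by positivity
    rw [show A *ᵥ x + r' - b = (A *ᵥ x - b) + r' by abel, hr]
    match_scalars <;> field_simp <;> ring
  set yh := (1/μ) • r'
  have hz : x - τ • (Aᴴ *ᵥ (A *ᵥ x + r' - b - (1/β) • y)) = x + (τ/β) • (Aᴴ *ᵥ yh) := by
    rw [hyh]
    simp only [mulVec_sub, mulVec_add, mulVec_smul]
    match_scalars <;> field_simp
  have hν : 0 ≤ τ/β := by positivity
  have hprox := reInner_sub_shrink_le (x - τ • (Aᴴ *ᵥ (A *ᵥ x + r' - b - (1/β) • y))) xt hν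
  rw [← hx, hz, show x + (τ/β) • (Aᴴ *ᵥ yh) - x' = (x - x') + (τ/β) • (Aᴴ *ᵥ yh) by abel,
    show xt - x' = -(x' - xt) by abel] at hprox
  simp only [reInner_add_left, reInner_smul_left, reInner_conjTranspose_mulVec,
    reInner_neg_right] at hprox
  have hsubgrad := l1_add_reInner_le_of_optimal A b hfeas hopt x'
  have hmono : 0 ≤ reInner (yh - (1/μ) • rt) (r' - rt) := by
    rw [← smul_sub, reInner_smul_left, reInner_self]
    exact mul_nonneg (by positivity) (l2sq_nonneg _)
  rw [show y - (1/μ) • rt - β • (A *ᵥ x' + r' - b + A *ᵥ (x - x')) = yh - (1/μ) • rt by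
      rw [hyh, mulVec_sub]; module,
    show A *ᵥ x' + r' - b = A *ᵥ (x' - xt) + (r' - rt) by rw [mulVec_sub, ← hfeas]; abel,
    reInner_add_right, reInner_sub_left yh]
  linarith [mul_le_mul_of_nonneg_left hsubgrad hν, mul_le_mul_of_nonneg_left hmono hν]

theorem contraction_of_key_inequality {β τ γ η L : ℝ} (hβ : 0 < β) (hτ : 0 < τ) (hγ : 0 < γ)
    (hη₁ : η ≤ 1) (hη₂ : 0 ≤ 2 - γ - γ * η) (hL : τ * L ≤ (1 - η) * (2 - γ - γ * η))
    {x x' xt : ι → ℂ} {y y' yt v a : κ → ℂ} (hy : y' = y - (γ * β) • v)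
    (ha : l2sq a ≤ L * l2sq (x - x'))
    (hkey : 0 ≤ reInner (x - x') (x' - xt) + (τ/β) * reInner (y - yt - β • (v + a)) v) :
    η * ((β/τ) * l2sq (x - x') + (1/(β*γ)) * l2sq (y - y')) ≤
      ((β/τ) * l2sq (x - xt) + (1/(β*γ)) * l2sq (y - yt)) -
        ((β/τ) * l2sq (x' - xt) + (1/(β*γ)) * l2sq (y' - yt)) := by
  set S := (1 - η) * ((β/τ) * l2sq (x - x'))
  set T := (2 - γ - γ * η) * (β * l2sq v)
  have hS : 0 ≤ S := mul_nonneg (by linarith) (mul_nonneg (by positivity) (l2sq_nonneg _))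
  have hT : 0 ≤ T := mul_nonneg hη₂ (mul_nonneg hβ.le (l2sq_nonneg v))
  have hcross : 2 * (-(β * reInner a v)) ≤ S + T := by
    refine two_mul_le_add_of_sq_le_mul hS hT ?_
    have hCS : reInner a v ^ 2 ≤ L * l2sq (x - x') * l2sq v :=
      (reInner_sq_le a v).trans (mul_le_mul_of_nonneg_right ha (l2sq_nonneg v))
    have hST : S * T = (1 - η) * (2 - γ - γ * η) * (β ^ 2 / τ) * (l2sq (x - x') * l2sq v) := by
      simp only [S, T]; ring
    rw [hST]
    calc (-(β * reInner a v)) ^ 2 = β ^ 2 * reInner a v ^ 2 := by ring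
      _ ≤ β ^ 2 * (L * l2sq (x - x') * l2sq v) := by gcongr
      _ = τ * L * (β ^ 2 / τ) * (l2sq (x - x') * l2sq v) := by field_simp
      _ ≤ _ := by gcongr; exact mul_nonneg (l2sq_nonneg _) (l2sq_nonneg _)
  have hxt : x - xt = (x - x') + (x' - xt) := (sub_add_sub_cancel x x' xt).symm
  have hyt : y' - yt = (y - yt) - (γ * β) • v := by rw [hy]; abel
  have hyy : y - y' = (γ * β) • v := by rw [hy, sub_sub_cancel]
  rw [hxt, hyt, hyy, l2sq_add (x - x'), l2sq_sub (y - yt), l2sq_smul, reInner_smul_right]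
  rw [reInner_sub_left (y - yt), reInner_smul_left, reInner_add_left, reInner_self] at hkey
  have hkey' := mul_nonneg (by positivity : 0 ≤ 2 * (β/τ)) hkey
  -- The gap in the goal is `S + T + 2β⟨a, v⟩` plus `2β/τ` times the key quantity.
  have hgap : ∀ E X D W Y V Z : ℝ,
      (β/τ) * (E + 2 * X + D) + 1/(β*γ) * W
        - ((β/τ) * D + 1/(β*γ) * (W - 2 * (γ*β*Y) + (γ*β)^2 * V))
        - η * ((β/τ) * E + 1/(β*γ) * ((γ*β)^2 * V))
      = (1 - η) * ((β/τ) * E) + (2 - γ - γ * η) * (β * V) + 2 * (β * Z)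
        + 2 * (β/τ) * (X + (τ/β) * (Y - β * (V + Z))) := by
    intros; field_simp; ring
  linarith [hgap (l2sq (x - x')) (reInner (x - x') (x' - xt)) (l2sq (x' - xt)) (l2sq (y - yt))
    (reInner (y - yt) v) (l2sq v) (reInner a v)]

end step

/-- The key contraction inequality (A.6) in the proof of Theorem 2.1:
‖u^k − ũ‖_G² − ‖u^{k+1} − ũ‖_G² ≥ η ‖u^k − u^{k+1}‖_G². -/
theorem padm_contraction_inequality {m n : ℕ} (A : Matrix (Fin m) (Fin n) ℂ)
    (b : Fin m → ℂ) (μ β τ γ : ℝ) (hμ : 0 < μ) (hβ : 0 < β) (hτ : 0 < τ) (hγ : 0 < γ)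
    (hτγ : τ * lmax A + γ < 2)
    (rt : Fin m → ℂ) (xt : Fin n → ℂ)
    (hfeas : A.mulVec xt + rt = b)
    (hopt : ∀ (x' : Fin n → ℂ) (r' : Fin m → ℂ), A.mulVec x' + r' = b →
      l1 xt + (1/(2*μ)) * l2sq rt ≤ l1 x' + (1/(2*μ)) * l2sq r')
    (x : ℕ → Fin n → ℂ) (r : ℕ → Fin m → ℂ) (y : ℕ → Fin m → ℂ)
    (hr : ∀ k, r (k+1) = (μ * β / (1 + μ * β)) • ((1/β) • y k - (A.mulVec (x k) - b)))
    (hx : ∀ k, x (k+1) =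
      shrink (x k - τ • (Aᴴ.mulVec (A.mulVec (x k) + r (k+1) - b - (1/β) • y k))) (τ/β))
    (hy : ∀ k, y (k+1) = y k - (γ * β) • (A.mulVec (x (k+1)) + r (k+1) - b)) :
    let yt : Fin m → ℂ := (1/μ) • rt
    let Gsq : (Fin n → ℂ) → (Fin m → ℂ) → ℝ := fun u v =>
      (β/τ) * l2sq u + (1/(β*γ)) * l2sq v
    let d : ℝ := 1 - τ * lmax A / (2 - γ)
    let η : ℝ := min (d^2) (d * (2 - γ) / (γ * (1 + d)))
    0 < d ∧ 0 < η ∧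
    ∀ k : ℕ,
      η * Gsq (x k - x (k+1)) (y k - y (k+1)) ≤
        Gsq (x k - xt) (y k - yt) - Gsq (x (k+1) - xt) (y (k+1) - yt) := by
  intro yt Gsq d η
  have hτlmax : 0 ≤ τ * lmax A := mul_nonneg hτ.le (lmax_nonneg A)
  have hγ₂ : 0 < 2 - γ := by linarith
  have hratio₀ : 0 ≤ τ * lmax A / (2 - γ) := div_nonneg hτlmax hγ₂.le
  have hratio₁ : τ * lmax A / (2 - γ) < 1 := (div_lt_one hγ₂).mpr (by linarith)
  have hd₀ : 0 < d := by linarith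
  have hd₁ : d ≤ 1 := by linarith
  obtain ⟨hη₁, hη₂, hη₃⟩ := padm_eta_bounds hd₀ hd₁ hγ (by linarith) rfl
  have hL : τ * lmax A = (1 - d) * (2 - γ) := by simp only [d]; field_simp; ring
  refine ⟨hd₀, lt_min (by positivity) (by positivity), fun k => ?_⟩
  exact contraction_of_key_inequality hβ hτ hγ hη₁ hη₂ (hL ▸ hη₃) (hy k)
    (l2sq_mulVec_le_lmax_mul A _) (padm_key_inequality A b hμ hβ hτ hfeas hopt (hr k) (hx k))
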